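/- Poisson limit theorem: if pₙ is a sequence in [0,1] with n·pₙ → λ > 0, then for every fixed k ∈ ℕ, the binomial probability C(n,k) pₙᵏ (1-pₙ)^{n-k} converges to the Poisson probability λᵏ e^{-λ}/k! as n → ∞. -/

import Mathlib

open Real Filter

theorem poisson_limit_general (p : ℕ → ℝ)
    (lam : ℝ)
    (h : Tendsto (fun n : ℕ => (n : ℝ) * p n) atTop (nhds lam)) (k : ℕ) :
    Tendsto (fun n : ℕ => (n.choose k : ℝ) * p n ^ k * (1 - p n) ^ (n - k)) atTop
      (nhds (lam ^ k * Real.exp (-lam) / (Nat.factorial k : ℝ))) := by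
  rw [mul_comm (lam ^ k)]
  exact ProbabilityTheory.tendsto_choose_mul_pow_of_tendsto_mul_atTop k h

/-- Poisson limit theorem: if `n * pₙ → λ > 0`, then for each fixed `k` the binomial
probability `C(n,k) pₙᵏ (1-pₙ)^(n-k)` converges to `λᵏ e^{-λ}/k!`. -/
theorem poisson_limit (p : ℕ → ℝ) (hp : ∀ n, p n ∈ Set.Icc (0 : ℝ) 1)
    (lam : ℝ) (hlam : 0 < lam)
    (h : Tendsto (fun n : ℕ => (n : ℝ) * p n) atTop (nhds lam)) (k : ℕ) :
    Tendsto (fun n : ℕ => (n.choose k : ℝ) * p n ^ k * (1 - p n) ^ (n - k)) atTop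
      (nhds (lam ^ k * Real.exp (-lam) / (Nat.factorial k : ℝ))) :=
  poisson_limit_general p lam h k
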